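/- arXiv:math/9802041 — 7 statements merged into one kernel-verified Lean document; each statement's English description precedes it below -/
import Mathlib

section
/- Let 0 → I → R' →^p R → 0 be a central extension of associative algebras. Then the fiber product R' ×_R R' is isomorphic as an algebra to R' ×_{R_ab} (R_ab ⊕ I), where R_ab ⊕ I is the trivial square-zero extension, via the map (x,y) ↦ (x, x_ab + y - x). -/
/-- For a central extension `0 → I → R' →p R → 0` the fiber product `R' ×_R R'` is isomorphic
to `R' ×_{R_ab} (R_ab ⊕ I)` via `(x,y) ↦ (x, x_ab + y - x)`.  Since the `R_ab`-module structure
on the central ideal `I` is given by multiplication in `R'`, the target identifies with pairs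
`(x, i) ∈ R' × I` with componentwise addition and multiplication
`(x, i)(x', i') = (x x', x i' + i x')` (the trivial square-zero extension law). -/
theorem fiber_product_central_extension
    (R' R : Type) [Ring R'] [Ring R] (p : R' →+* R) (hsurj : Function.Surjective p)
    (hsq : ∀ x y : R', p x = 0 → p y = 0 → x * y = 0)
    (hcent : ∀ x : R', p x = 0 → ∀ r : R', x * r = r * x) :
    ∃ e : (RingHom.eqLocus (p.comp (RingHom.fst R' R')) (p.comp (RingHom.snd R' R'))) ≃
        R' × RingHom.ker p,
      (∀ z, (e z).1 = (z : R' × R').1 ∧ ((e z).2 : R') = (z : R' × R').2 - (z : R' × R').1) ∧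
      (∀ z w, (e (z * w)).1 = (e z).1 * (e w).1 ∧
          ((e (z * w)).2 : R') = (e z).1 * ((e w).2 : R') + ((e z).2 : R') * (e w).1) ∧
      (∀ z w, (e (z + w)).1 = (e z).1 + (e w).1 ∧
          ((e (z + w)).2 : R') = ((e z).2 : R') + ((e w).2 : R')) := by
  refine ⟨⟨fun z => (z.1.1, ⟨z.1.2 - z.1.1, ?_⟩),
      fun w => ⟨(w.1, w.1 + w.2), ?_⟩, fun z => ?_, fun w => ?_⟩, ?_, ?_, ?_⟩
  · have hz : p z.1.1 = p z.1.2 := z.2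
    simp [RingHom.mem_ker, hz]
  · have hw := w.2.2
    rw [RingHom.mem_ker] at hw
    show p _ = p _
    simp [hw]
  · ext <;> simp
  · ext <;> simp
  · intro z; exact ⟨rfl, rfl⟩
  · intro z w
    refine ⟨rfl, ?_⟩
    have hz : p z.1.1 = p z.1.2 := z.2
    have hw : p w.1.1 = p w.1.2 := w.2
    have h0 : (z.1.2 - z.1.1) * (w.1.2 - w.1.1) = 0 := by
      apply hsq <;> simp [← hz, ← hw]
    show z.1.2 * w.1.2 - z.1.1 * w.1.1 = z.1.1 * (w.1.2 - w.1.1) + (z.1.2 - z.1.1) * w.1.1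
    calc z.1.2 * w.1.2 - z.1.1 * w.1.1
        = z.1.1 * (w.1.2 - w.1.1) + (z.1.2 - z.1.1) * w.1.1 + (z.1.2 - z.1.1) * (w.1.2 - w.1.1) := by
          noncomm_ring
      _ = z.1.1 * (w.1.2 - w.1.1) + (z.1.2 - z.1.1) * w.1.1 := by rw [h0, add_zero]
  · intro z w
    refine ⟨rfl, ?_⟩
    show (z.1.2 + w.1.2) - (z.1.1 + w.1.1) = (z.1.2 - z.1.1) + (w.1.2 - w.1.1)
    abel
end

section
/- Let p: R' → R be a central extension of associative algebras with kernel I, and let g: R' → R' be an algebra endomorphism with p∘g = p. If the induced map p_*: R'_ab → R_ab is an isomorphism, then g restricts to the identity on I, and g is an algebra automorphism of R'. -/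
/-- The ring congruence generated by identifying `x*y` with `y*x`; the quotient is the
abelianization `R_ab = R/[R,R]`. -/
def abRingCon (R : Type) [Ring R] : RingCon R :=
  ringConGen fun a b : R => ∃ x y : R, a = x * y ∧ b = y * x

/-- The abelianization `R_ab` of an associative ring `R`. -/
def RingAb (R : Type) [Ring R] : Type := (abRingCon R).Quotient

instance (R : Type) [Ring R] : Ring (RingAb R) :=
  inferInstanceAs (Ring (abRingCon R).Quotient)

/-- The canonical surjection `R → R_ab`. -/
def abHom (R : Type) [Ring R] : R →+* RingAb R := RingCon.mk' _

/-- Let `p : R' → R` be a central extension (kernel `I` square-zero and central) and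
`g : R' → R'` an algebra endomorphism with `p ∘ g = p`.  If the induced map
`p_* : R'_ab → R_ab` is an isomorphism, then `g` is the identity on `I = ker p`,
and `g` is an automorphism. -/
theorem endo_of_central_extension_is_aut
    (R' R : Type) [Ring R'] [Ring R] (p : R' →+* R) (hsurj : Function.Surjective p)
    (hsq : ∀ x y : R', p x = 0 → p y = 0 → x * y = 0)
    (hcent : ∀ x : R', p x = 0 → ∀ r : R', x * r = r * x)
    (g : R' →+* R') (hg : ∀ x, p (g x) = p x)
    (hiso : ∃ q : RingAb R' →+* RingAb R,
      q.comp (abHom R') = (abHom R).comp p ∧ Function.Bijective q) :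
    (∀ x : R', p x = 0 → g x = x) ∧ Function.Bijective g := by
  obtain ⟨q, hq, hqinj, _⟩ := hiso
  set f : R' → R' := fun x => g x - x with hfdef
  have hgx : ∀ z : R', g z = z + f z := fun z => by simp [hfdef]
  have hfI : ∀ x, p (f x) = 0 := fun x => by simp [hfdef, map_sub, hg]
  have hfadd : ∀ x y : R', f (x + y) = f x + f y := by
    intro x y; simp only [hfdef, map_add]; abel
  have hfsub : ∀ x y : R', f (x - y) = f x - f y := by
    intro x y; simp only [hfdef, map_sub]; abel
  have hf0 : f 0 = 0 := by simp [hfdef]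
  have hfmul : ∀ x y : R', f (x * y) = f x * y + x * f y := by
    intro x y
    have h3 : f x * f y = 0 := hsq _ _ (hfI x) (hfI y)
    have h4 : g (x * y) = g x * g y := map_mul g x y
    rw [hgx, hgx, hgx] at h4
    have h5 : (x + f x) * (y + f y) = x * y + (f x * y + x * f y + f x * f y) := by
      noncomm_ring
    rw [h5, h3, add_zero] at h4
    have := add_left_cancel h4
    exact this
  -- key induction
  have key : ∀ a b : R', RingConGen.Rel (fun a b : R' => ∃ x y : R', a = x * y ∧ b = y * x) a b →
      f a = f b ∧ ∀ c : R', p c = 0 → (a - b) * c = 0 ∧ c * (a - b) = 0 := by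
    intro a b h
    induction h with
    | of a b hab =>
      obtain ⟨x, y, rfl, rfl⟩ := hab
      constructor
      · rw [hfmul, hfmul, hcent (f x) (hfI x) y, hcent (f y) (hfI y) x]
        abel
      · intro c hc
        have hyc : p (y * c) = 0 := by simp [map_mul, hc]
        have hcx : p (c * x) = 0 := by simp [map_mul, hc]
        constructor
        · have : x * y * c = y * x * c := by
            calc x * y * c = x * (y * c) := by rw [mul_assoc]
              _ = (y * c) * x := by rw [hcent (y * c) hyc x]
              _ = y * (c * x) := by rw [mul_assoc]
              _ = y * (x * c) := by rw [hcent c hc x]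
              _ = y * x * c := by rw [mul_assoc]
          rw [sub_mul, this, sub_self]
        · have : c * (x * y) = c * (y * x) := by
            calc c * (x * y) = (c * x) * y := by rw [mul_assoc]
              _ = y * (c * x) := by rw [hcent (c * x) hcx y]
              _ = (y * c) * x := by rw [mul_assoc]
              _ = (c * y) * x := by rw [← hcent c hc y]
              _ = c * (y * x) := by rw [mul_assoc]
          rw [mul_sub, this, sub_self]
    | refl a => simp
    | symm h ih =>
      obtain ⟨ih1, ih2⟩ := ih
      refine ⟨ih1.symm, fun c hc => ?_⟩
      obtain ⟨e1, e2⟩ := ih2 c hc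
      exact ⟨by rw [← neg_sub, neg_mul, e1, neg_zero],
             by rw [← neg_sub, mul_neg, e2, neg_zero]⟩
    | @trans x y z h1 h2 ih1 ih2 =>
      obtain ⟨ia, ib⟩ := ih1; obtain ⟨ja, jb⟩ := ih2
      refine ⟨ia.trans ja, fun c hc => ?_⟩
      obtain ⟨e1, e2⟩ := ib c hc; obtain ⟨e3, e4⟩ := jb c hc
      constructor
      · have : (x - z) * c = (x - y) * c + (y - z) * c := by noncomm_ring
        rw [this, e1, e3, add_zero]
      · have : c * (x - z) = c * (x - y) + c * (y - z) := by noncomm_ring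
        rw [this, e2, e4, add_zero]
    | @add w x y z h1 h2 ih1 ih2 =>
      obtain ⟨ia, ib⟩ := ih1; obtain ⟨ja, jb⟩ := ih2
      refine ⟨by rw [hfadd, hfadd, ia, ja], fun c hc => ?_⟩
      obtain ⟨e1, e2⟩ := ib c hc; obtain ⟨e3, e4⟩ := jb c hc
      constructor
      · have : (w + y - (x + z)) * c = (w - x) * c + (y - z) * c := by noncomm_ring
        rw [this, e1, e3, add_zero]
      · have : c * (w + y - (x + z)) = c * (w - x) + c * (y - z) := by noncomm_ring
        rw [this, e2, e4, add_zero]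
    | @mul w x y z h1 h2 ih1 ih2 =>
      obtain ⟨ia, ib⟩ := ih1; obtain ⟨ja, jb⟩ := ih2
      -- w*y vs x*z ; f w = f x, f y = f z, (w-x) kills I both sides, (y-z) kills I both sides
      have hdec : w * y - x * z = (w - x) * y + x * (y - z) := by noncomm_ring
      constructor
      · have hfa : f (w * y) - f (x * z) = f (w * y - x * z) := (hfsub _ _).symm
        rw [hdec] at hfa
        rw [hfadd ((w - x) * y) (x * (y - z)), hfmul (w - x) y, hfmul x (y - z)] at hfa
        have hwx : f (w - x) = 0 := by rw [hfsub, ia, sub_self]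
        have hyz : f (y - z) = 0 := by rw [hfsub, ja, sub_self]
        have h1' : (w - x) * f y = 0 := (ib (f y) (hfI y)).1
        have h2' : f x * (y - z) = 0 := by
          rw [hcent (f x) (hfI x) (y - z)]
          exact (jb (f x) (hfI x)).1
        rw [hwx, hyz, h1', h2'] at hfa
        simp only [zero_mul, mul_zero, add_zero, zero_add] at hfa
        exact sub_eq_zero.mp hfa
      · intro c hc
        constructor
        · have e1 : (w - x) * (y * c) = 0 := (ib (y * c) (by simp [map_mul, hc])).1
          have e2 : x * ((y - z) * c) = x * 0 := by rw [(jb c hc).1]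
          calc (w * y - x * z) * c = (w - x) * (y * c) + x * ((y - z) * c) := by noncomm_ring
            _ = 0 := by rw [e1, e2, mul_zero, zero_add]
        · have e1 : (c * (w - x)) * y = 0 * y := by rw [(ib c hc).2]
          have e2 : (c * x) * (y - z) = 0 := (jb (c * x) (by simp [map_mul, hc])).2
          calc c * (w * y - x * z) = (c * (w - x)) * y + (c * x) * (y - z) := by noncomm_ring
            _ = 0 := by rw [e1, e2, zero_mul, zero_add]
  -- the fixed-point property on I
  have hfix : ∀ x : R', p x = 0 → g x = x := by
    intro x hx
    have e1 := RingHom.congr_fun hq x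
    have e2 := RingHom.congr_fun hq (0 : R')
    simp only [RingHom.comp_apply] at e1 e2
    rw [hx] at e1
    rw [map_zero p] at e2
    have h2 : abHom R' x = abHom R' 0 := hqinj (e1.trans e2.symm)
    have h3 : (abRingCon R') x 0 := by
      rw [show abHom R' x = (x : (abRingCon R').Quotient) from rfl,
        show abHom R' (0:R') = ((0:R') : (abRingCon R').Quotient) from rfl] at h2
      exact (RingCon.eq _).mp h2
    have h4 : RingConGen.Rel (fun a b : R' => ∃ x y : R', a = x * y ∧ b = y * x) x 0 := h3
    have h5 := (key x 0 h4).1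
    rw [hf0] at h5
    exact sub_eq_zero.mp h5
  refine ⟨hfix, ?_, ?_⟩
  · intro a b hab
    have : p (a - b) = 0 := by rw [map_sub, sub_eq_zero]; rw [← hg a, ← hg b, hab]
    have := hfix (a - b) this
    rw [map_sub, hab, sub_self] at this
    exact sub_eq_zero.mp this.symm
  · intro y
    refine ⟨y - f y, ?_⟩
    rw [map_sub, hfix (f y) (hfI y), hgx y]
    abel
end

section
/- Let R be an associative algebra with F^{n+1}R = 0 (where F is the commutator filtration). Let π: R → R_ab be the abelianization and S̄ ⊆ R_ab ∖ {0} a multiplicative subset. Then S = π^{-1}(S̄) satisfies the left Ore conditions: (OL1) for any a ∈ R, s ∈ S there exist b ∈ R, u ∈ S with ua = bs; (OL2) if as = 0 with a ∈ R, s ∈ S then ta = 0 for some t ∈ S. -/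
/-- The lower central series of an associative algebra `R` viewed as a Lie algebra via
`[a,b] = a*b - b*a`.  Here `lcs R k` corresponds to `L_{k+1}`, so that elements of `lcs R k`
are spanned by iterated commutators containing `k` bracket pairs; `lcs R 0 = R`. -/
def lcs (R : Type) [Ring R] [Algebra ℂ R] : ℕ → Submodule ℂ R
  | 0 => ⊤
  | n + 1 => Submodule.span ℂ {x : R | ∃ a : R, ∃ b ∈ lcs R n, x = a * b - b * a}

/-- The commutator (NC-) filtration: `ncF R d` is spanned by all products
`c₁ ⋯ c_m` where `c_j` is an iterated commutator with `k_j` bracket pairs and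
`k₁ + ⋯ + k_m = d` (factors with `k_j = 0` are arbitrary elements of `R`).
This is the two-sided ideal `F^d R = Σ R·L_{i₁}·R ⋯ R·L_{i_m}·R`. -/
def ncF (R : Type) [Ring R] [Algebra ℂ R] (d : ℕ) : Submodule ℂ R :=
  Submodule.span ℂ {x : R | ∃ l : List (ℕ × R), (l.map Prod.fst).sum = d ∧
    (∀ q ∈ l, q.2 ∈ lcs R q.1) ∧ x = (l.map Prod.snd).prod}

def adj {R : Type} [Ring R] (s : R) : R → R := fun x => s * x - x * s

lemma adj_iter_mem_lcs (R : Type) [Ring R] [Algebra ℂ R] (s a : R) :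
    ∀ k, (adj s)^[k] a ∈ lcs R k
  | 0 => by simp [lcs]
  | k + 1 => by
    rw [Function.iterate_succ_apply']
    exact Submodule.subset_span ⟨s, (adj s)^[k] a, adj_iter_mem_lcs R s a k, rfl⟩

lemma mem_ncF_of_mem_lcs (R : Type) [Ring R] [Algebra ℂ R] (d : ℕ) (x : R)
    (hx : x ∈ lcs R d) : x ∈ ncF R d :=
  Submodule.subset_span ⟨[(d, x)], by simp, by simpa, by simp⟩

lemma pow_mul_eq (R : Type) [Ring R] (s a : R) :
    ∀ m : ℕ, s ^ m * a =
      (∑ i ∈ Finset.range m, s ^ i * (adj s)^[m - 1 - i] a) * s + (adj s)^[m] a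
  | 0 => by simp
  | m + 1 => by
    have ih := pow_mul_eq R s a m
    have h1 : s ^ (m + 1) * a = s * (s ^ m * a) := by
      rw [pow_succ']
      rw [mul_assoc]
    have h2 : s * (adj s)^[m] a = (adj s)^[m + 1] a + (adj s)^[m] a * s := by
      rw [Function.iterate_succ_apply']
      show _ = (s * (adj s)^[m] a - (adj s)^[m] a * s) + _
      abel
    rw [h1, ih, mul_add, h2, Finset.sum_range_succ']
    simp only [pow_zero, one_mul, Nat.sub_zero, Nat.add_sub_cancel]
    have hcong : ∀ i ∈ Finset.range m,
        s * (s ^ i * (adj s)^[m - 1 - i] a) = s ^ (i + 1) * (adj s)^[m - (i + 1)] a := by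
      intro i hi
      have h3 : m - (i + 1) = m - 1 - i := by omega
      rw [h3, pow_succ', mul_assoc]
    rw [← mul_assoc, Finset.mul_sum, Finset.sum_congr rfl hcong, add_mul]
    abel

lemma mul_zero_iter (R : Type) [Ring R] (s a : R) (h : a * s = 0) :
    ∀ m : ℕ, s ^ m * a = (adj s)^[m] a ∧ (adj s)^[m] a * s = 0
  | 0 => by simpa using h
  | m + 1 => by
    obtain ⟨h1, h2⟩ := mul_zero_iter R s a h m
    have hit : (adj s)^[m + 1] a = s * (adj s)^[m] a - (adj s)^[m] a * s :=
      Function.iterate_succ_apply' (adj s) m a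
    constructor
    · rw [hit, h2, sub_zero, ← h1, pow_succ', mul_assoc]
    · rw [hit, sub_mul, mul_assoc, h2, mul_zero, zero_mul, sub_zero]

lemma abHom_pow_mem (R : Type) [Ring R] (Sbar : Set (RingAb R))
    (hmul : ∀ a ∈ Sbar, ∀ b ∈ Sbar, a * b ∈ Sbar) (s : R) (hs : abHom R s ∈ Sbar) :
    ∀ k : ℕ, abHom R (s ^ (k + 1)) ∈ Sbar
  | 0 => by simpa using hs
  | k + 1 => by
    rw [pow_succ, map_mul]
    exact hmul _ (abHom_pow_mem R Sbar hmul s hs k) _ hs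


/-- Let `R` be NC-nilpotent (`F^{n+1}R = 0`), `π : R → R_ab` the abelianization, and
`S̄ ⊆ R_ab ∖ {0}` a multiplicative subset.  Then `S = π⁻¹(S̄)` satisfies the left Ore
conditions (OL1) and (OL2). -/
theorem preimage_mult_set_satisfies_left_ore
    (R : Type) [Ring R] [Algebra ℂ R] (n : ℕ) (hF : ncF R (n + 1) = ⊥)
    (Sbar : Set (RingAb R))
    (hmul : ∀ a ∈ Sbar, ∀ b ∈ Sbar, a * b ∈ Sbar)
    (hnz : ∀ a ∈ Sbar, a ≠ 0) :
    (∀ a s : R, abHom R s ∈ Sbar → ∃ b u : R, abHom R u ∈ Sbar ∧ u * a = b * s) ∧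
      (∀ a s : R, abHom R s ∈ Sbar → a * s = 0 → ∃ t : R, abHom R t ∈ Sbar ∧ t * a = 0) := by
  have hzero : ∀ s a : R, (adj s)^[n + 1] a = 0 := by
    intro s a
    have := mem_ncF_of_mem_lcs R (n + 1) _ (adj_iter_mem_lcs R s a (n + 1))
    rw [hF] at this
    simpa using this
  constructor
  · intro a s hs
    refine ⟨∑ i ∈ Finset.range (n + 1), s ^ i * (adj s)^[n + 1 - 1 - i] a, s ^ (n + 1),
      abHom_pow_mem R Sbar hmul s hs n, ?_⟩
    rw [pow_mul_eq R s a (n + 1), hzero, add_zero]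
  · intro a s hs h
    exact ⟨s ^ (n + 1), abHom_pow_mem R Sbar hmul s hs n, by
      rw [(mul_zero_iter R s a h (n + 1)).1, hzero]⟩
end

section
/- If R is an NC-complete algebra (complete with respect to the commutator filtration) and R_ab is a local ring, then R is a local ring. -/
/-!
Every commutator lies in `F¹R`, so an element of `R` whose image in `R_ab` is invertible has an
inverse modulo `F¹R`. Elements `1 - t` with `t ∈ F¹R` are invertible in `R` by the geometric
series `∑ tⁱ`, which converges because `tⁱ ∈ FⁱR`. Hence `R → R_ab` reflects units, and a ring
with a unit-reflecting map to a local ring is local.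
-/

open Finset

theorem isUnit_of_isUnit_mul_of_isUnit_mul {M : Type*} [Monoid M] {a b : M}
    (hab : IsUnit (a * b)) (hba : IsUnit (b * a)) : IsUnit a :=
  isUnit_iff_exists_and_exists.2
    ⟨⟨b * ↑hab.unit⁻¹, by rw [← mul_assoc, hab.mul_val_inv]⟩,
      ⟨↑hba.unit⁻¹ * b, by rw [mul_assoc, hba.val_inv_mul]⟩⟩

theorem RingCon.isLocalHom_mk' {R : Type*} [Semiring R] (c : RingCon R)
    (h : ∀ x, c x 1 → IsUnit x) : IsLocalHom c.mk' where
  map_nonunit a ha := by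
    obtain ⟨b', hab, hba⟩ := isUnit_iff_exists.1 ha
    obtain ⟨b, rfl⟩ := c.mk'_surjective b'
    rw [← map_mul, ← map_one c.mk'] at hab hba
    exact isUnit_of_isUnit_mul_of_isUnit_mul (h _ (c.eq.1 hab)) (h _ (c.eq.1 hba))

section NCFiltration

variable {R : Type} [Ring R] [Algebra ℂ R]

theorem ncF_zero : ncF R 0 = ⊤ :=
  eq_top_iff.2 fun x _ => Submodule.subset_span
    ⟨[(0, x)], by simp, by simp [lcs], by simp⟩

theorem mul_mem_ncF {a b : ℕ} {x y : R} (hx : x ∈ ncF R a) (hy : y ∈ ncF R b) :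
    x * y ∈ ncF R (a + b) := by
  have hle : ncF R a * ncF R b ≤ ncF R (a + b) := by
    rw [ncF, ncF, Submodule.span_mul_span]
    refine Submodule.span_le.2 ?_
    rintro _ ⟨_, ⟨l₁, hsum₁, hmem₁, rfl⟩, _, ⟨l₂, hsum₂, hmem₂, rfl⟩, rfl⟩
    refine Submodule.subset_span ⟨l₁ ++ l₂, by simp [hsum₁, hsum₂], ?_, by simp⟩
    intro q hq
    exact (List.mem_append.1 hq).elim (hmem₁ q) (hmem₂ q)
  exact hle (Submodule.mul_mem_mul hx hy)

theorem mul_mem_ncF_left {d : ℕ} (r : R) {x : R} (hx : x ∈ ncF R d) : r * x ∈ ncF R d := by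
  simpa using mul_mem_ncF (ncF_zero (R := R) ▸ Submodule.mem_top : r ∈ ncF R 0) hx

theorem mul_mem_ncF_right {d : ℕ} (r : R) {x : R} (hx : x ∈ ncF R d) : x * r ∈ ncF R d := by
  simpa using mul_mem_ncF hx (ncF_zero (R := R) ▸ Submodule.mem_top : r ∈ ncF R 0)

theorem pow_mem_ncF {t : R} (ht : t ∈ ncF R 1) (d : ℕ) : t ^ d ∈ ncF R d := by
  induction d with
  | zero => simp [ncF_zero]
  | succ n ih => rw [pow_succ]; exact mul_mem_ncF ih ht

theorem commutator_mem_ncF_one (x y : R) : x * y - y * x ∈ ncF R 1 := by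
  have hlcs : x * y - y * x ∈ lcs R 1 := Submodule.subset_span ⟨x, y, Submodule.mem_top, rfl⟩
  exact Submodule.subset_span ⟨[(1, x * y - y * x)], by simp, by simpa using hlcs, by simp⟩

variable (R) in
def ncFTwoSidedIdeal (d : ℕ) : TwoSidedIdeal R :=
  .mk' (ncF R d) (ncF R d).zero_mem (ncF R d).add_mem (ncF R d).neg_mem
    (mul_mem_ncF_left _) (mul_mem_ncF_right _)

theorem sub_mem_ncF_one_of_abRingCon {a b : R} (h : abRingCon R a b) : a - b ∈ ncF R 1 := by
  have hle : abRingCon R ≤ (ncFTwoSidedIdeal R 1).ringCon := by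
    refine RingCon.ringConGen_le.2 ?_
    rintro _ _ ⟨x, y, rfl, rfl⟩
    simpa [TwoSidedIdeal.rel_iff, ncFTwoSidedIdeal] using commutator_mem_ncF_one x y
  simpa [TwoSidedIdeal.rel_iff, ncFTwoSidedIdeal] using hle h

theorem isUnit_one_sub_of_mem_ncF_one
    (hHaus : ∀ x : R, (∀ d, x ∈ ncF R d) → x = 0)
    (hCompl : ∀ f : ℕ → R, (∀ d, f (d + 1) - f d ∈ ncF R d) → ∃ x, ∀ d, x - f d ∈ ncF R d)
    {t : R} (ht : t ∈ ncF R 1) : IsUnit (1 - t) := by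
  obtain ⟨x, hx⟩ := hCompl (fun d => ∑ i ∈ range d, t ^ i)
    fun d => by simpa [sum_range_succ] using pow_mem_ncF ht d
  refine isUnit_iff_exists.2 ⟨x, sub_eq_zero.1 (hHaus _ fun d => ?_),
    sub_eq_zero.1 (hHaus _ fun d => ?_)⟩
  · have e : (1 - t) * x - 1 = (1 - t) * (x - ∑ i ∈ range d, t ^ i) - t ^ d := by
      rw [mul_sub, mul_neg_geom_sum]; abel
    rw [e]
    exact sub_mem (mul_mem_ncF_left _ (hx d)) (pow_mem_ncF ht d)
  · have e : x * (1 - t) - 1 = (x - ∑ i ∈ range d, t ^ i) * (1 - t) - t ^ d := by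
      rw [sub_mul, geom_sum_mul_neg]; abel
    rw [e]
    exact sub_mem (mul_mem_ncF_right _ (hx d)) (pow_mem_ncF ht d)

end NCFiltration

/-- If `R` is NC-complete (Hausdorff and complete with respect to the commutator filtration)
and its abelianization `R_ab` is a local ring, then `R` is a local ring. -/
theorem isLocalRing_of_nc_complete
    (R : Type) [Ring R] [Algebra ℂ R]
    (hHaus : ∀ x : R, (∀ d, x ∈ ncF R d) → x = 0)
    (hCompl : ∀ f : ℕ → R, (∀ d, f (d + 1) - f d ∈ ncF R d) →
      ∃ x, ∀ d, x - f d ∈ ncF R d)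
    (hloc : IsLocalRing (RingAb R)) :
    IsLocalRing R := by
  have : IsLocalHom (abRingCon R).mk' := (abRingCon R).isLocalHom_mk' fun x hx => by
    simpa using isUnit_one_sub_of_mem_ncF_one hHaus hCompl
      (sub_mem_ncF_one_of_abRingCon (RingCon.symm _ hx))
  exact @RingHom.domain_isLocalRing R (RingAb R) _ _ hloc (abRingCon R).mk' this
end

section
/- Let R be a commutative algebra and Ω²_R the second exterior power of the Kähler differentials. Then R ⊕ Ω²_R with multiplication (f₁, ω₁)(f₂, ω₂) = (f₁f₂, f₁ω₂ + f₂ω₁ + df₁ ∧ df₂) is an associative (noncommutative) algebra, and it is a central extension of R with square-zero kernel Ω²_R. -/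
open ExteriorAlgebra

/-- The wedge `a ∧ b` as an element of the second exterior power `⋀[R]^2 M`. -/
noncomputable def wedge2 {R M : Type} [CommRing R] [AddCommGroup M] [Module R M]
    (a b : M) : ⋀[R]^2 M :=
  ⟨ιMulti R 2 ![a, b], ιMulti_range R 2 ⟨![a, b], rfl⟩⟩

lemma wedge2_val {R M : Type} [CommRing R] [AddCommGroup M] [Module R M] (a b : M) :
    (wedge2 (R := R) a b : ExteriorAlgebra R M) = ι R a * ι R b := by
  show ιMulti R 2 ![a, b] = _
  simp [ιMulti_apply, List.ofFn_succ]

lemma wedge2_add_left {R M : Type} [CommRing R] [AddCommGroup M] [Module R M] (a a' b : M) :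
    wedge2 (R := R) (a + a') b = wedge2 (R := R) a b + wedge2 (R := R) a' b := by
  ext; simp [wedge2_val, add_mul]

lemma wedge2_add_right {R M : Type} [CommRing R] [AddCommGroup M] [Module R M] (a b b' : M) :
    wedge2 (R := R) a (b + b') = wedge2 (R := R) a b + wedge2 (R := R) a b' := by
  ext; simp [wedge2_val, mul_add]

lemma wedge2_smul_left {R M : Type} [CommRing R] [AddCommGroup M] [Module R M] (r : R) (a b : M) :
    wedge2 (R := R) (r • a) b = r • wedge2 (R := R) a b := by
  ext; simp [wedge2_val, smul_mul_assoc]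

lemma wedge2_smul_right {R M : Type} [CommRing R] [AddCommGroup M] [Module R M] (r : R) (a b : M) :
    wedge2 (R := R) a (r • b) = r • wedge2 (R := R) a b := by
  ext; simp [wedge2_val, mul_smul_comm]

lemma wedge2_zero_left {R M : Type} [CommRing R] [AddCommGroup M] [Module R M] (b : M) :
    wedge2 (R := R) (0 : M) b = 0 := by
  ext; simp [wedge2_val]

lemma wedge2_zero_right {R M : Type} [CommRing R] [AddCommGroup M] [Module R M] (a : M) :
    wedge2 (R := R) a (0 : M) = 0 := by
  ext; simp [wedge2_val]

/-- For a commutative algebra `R`, the product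
`(f₁, ω₁)(f₂, ω₂) = (f₁f₂, f₁ω₂ + f₂ω₁ + df₁ ∧ df₂)` on `R ⊕ Ω²_R` is associative and unital,
distributes over addition, the ideal `Ω²_R` squares to zero and is central: so `R ⊕ Ω²_R` is
a central extension of `R` with square-zero kernel `Ω²_R`. -/
theorem trivial_central_extension_by_Omega2
    (R : Type) [CommRing R] [Algebra ℂ R]
    (mul : R × ⋀[R]^2 (Ω[R⁄ℂ]) → R × ⋀[R]^2 (Ω[R⁄ℂ]) → R × ⋀[R]^2 (Ω[R⁄ℂ]))
    (hmul : ∀ p q, mul p q =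
      (p.1 * q.1, p.1 • q.2 + q.1 • p.2 +
        wedge2 (KaehlerDifferential.D ℂ R p.1) (KaehlerDifferential.D ℂ R q.1))) :
    (∀ p q r, mul (mul p q) r = mul p (mul q r)) ∧
      (∀ p, mul (1, 0) p = p ∧ mul p (1, 0) = p) ∧
      (∀ p q r, mul p (q + r) = mul p q + mul p r) ∧
      (∀ p q r, mul (p + q) r = mul p r + mul q r) ∧
      (∀ ω ω' : ⋀[R]^2 (Ω[R⁄ℂ]), mul (0, ω) (0, ω') = 0) ∧
      (∀ (ω : ⋀[R]^2 (Ω[R⁄ℂ])) (p : R × ⋀[R]^2 (Ω[R⁄ℂ])), mul (0, ω) p = mul p (0, ω)) := by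
  refine ⟨?_, ?_, ?_, ?_, ?_, ?_⟩
  · intro p q r
    simp only [hmul]
    refine Prod.ext (mul_assoc _ _ _) ?_
    simp only [Derivation.leibniz, wedge2_add_left, wedge2_add_right, wedge2_smul_left,
      wedge2_smul_right, smul_add, smul_smul]
    module
  · intro p
    constructor <;>
    · rw [hmul]
      simp [wedge2_zero_left, wedge2_zero_right]
  · intro p q r
    simp only [hmul, Prod.fst_add, Prod.snd_add, Prod.mk_add_mk, map_add, wedge2_add_right]
    refine Prod.ext (by ring) ?_
    simp only [smul_add, add_smul]
    abel
  · intro p q r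
    simp only [hmul, Prod.fst_add, Prod.snd_add, Prod.mk_add_mk, map_add, wedge2_add_left]
    refine Prod.ext (by ring) ?_
    simp only [smul_add, add_smul]
    abel
  · intro ω ω'
    rw [hmul]
    simp [wedge2_zero_left]
  · intro ω p
    rw [hmul, hmul]
    simp [wedge2_zero_left, wedge2_zero_right]
end

section
/- Let Λ' → Λ be a central extension of rings with kernel I (I² = 0, I central). Let P' be a projective left Λ'-module, P = Λ ⊗_{Λ'} P', and Q ⊆ P a direct summand. Then the set of direct summands Q' ⊆ P' with Λ ⊗_{Λ'} Q' = Q is nonempty when P' is free and Q is a free direct summand spanned by part of a basis, and in that case it is in bijection with Hom-data: extensions Q' correspond bijectively to matrices over I, i.e. to elements of I ⊗_{Λ_ab} Hom_{Λ_ab}(Q_ab, P_ab/Q_ab). -/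
/-- The coordinatewise map `(Λ')ⁿ → Λⁿ` induced by a ring homomorphism `p`, as a
`p`-semilinear map. -/
def piMap {A B : Type} [Ring A] [Ring B] (p : A →+* B) (n : ℕ) :
    (Fin n → A) →ₛₗ[p] (Fin n → B) where
  toFun v i := p (v i)
  map_add' u v := by funext i; simp
  map_smul' c v := by funext i; simp


section aux
variable {Λ' : Type} [Ring Λ'] {n m : ℕ}

/-- The spanning vector `e'_i + Σ_j B i j • e'_{m+j}`. -/
def vvec (hmn : m ≤ n) (B : Matrix (Fin m) (Fin (n-m)) Λ') (i : Fin m) : Fin n → Λ' :=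
  Pi.single (Fin.castLE hmn i) 1 +
    ∑ j, Pi.single (Fin.cast (Nat.sub_add_cancel hmn) (j.addNat m)) (B i j)

lemma vvec_apply (hmn : m ≤ n) (B : Matrix (Fin m) (Fin (n-m)) Λ') (i : Fin m) (k : Fin n) :
    vvec hmn B i k =
      if h : (k : ℕ) < m then (if (k : ℕ) = (i : ℕ) then 1 else 0)
      else B i ⟨(k : ℕ) - m, by have := k.isLt; omega⟩ := by
  unfold vvec
  simp only [Pi.add_apply, Finset.sum_apply, Pi.single_apply]
  by_cases h : (k : ℕ) < m
  · rw [dif_pos h]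
    have h2 : ∀ j : Fin (n-m), ¬ (k = Fin.cast (Nat.sub_add_cancel hmn) (j.addNat m)) := by
      intro j hj
      have := congrArg Fin.val hj
      simp [Fin.coe_cast] at this
      omega
    rw [Finset.sum_eq_zero (fun j _ => if_neg (h2 j)), add_zero]
    congr 1
    simp [Fin.ext_iff]
  · rw [dif_neg h]
    have h1 : ¬ (k = Fin.castLE hmn i) := by
      intro hk
      have := congrArg Fin.val hk
      simp at this
      omega
    rw [if_neg h1, zero_add]
    have hlt : (k : ℕ) - m < n - m := by have := k.isLt; omega
    rw [Finset.sum_eq_single (⟨(k : ℕ) - m, hlt⟩ : Fin (n-m))]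
    · rw [if_pos]
      simp [Fin.ext_iff]
      omega
    · intro j _ hj
      rw [if_neg]
      intro hk
      apply hj
      have := congrArg Fin.val hk
      simp [Fin.ext_iff] at this ⊢
      omega
    · intro hmem; exact absurd (Finset.mem_univ _) hmem

lemma lincomb_apply (hmn : m ≤ n) (B : Matrix (Fin m) (Fin (n-m)) Λ') (c : Fin m → Λ')
    (k : Fin n) :
    (∑ i, c i • vvec hmn B i) k =
      if h : (k : ℕ) < m then c ⟨(k : ℕ), h⟩
      else ∑ i, c i * B i ⟨(k : ℕ) - m, by have := k.isLt; omega⟩ := by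
  rw [Finset.sum_apply]
  simp only [Pi.smul_apply, smul_eq_mul, vvec_apply]
  by_cases h : (k : ℕ) < m
  · simp only [dif_pos h]
    rw [Finset.sum_eq_single (⟨(k : ℕ), h⟩ : Fin m)]
    · simp
    · intro i _ hi
      rw [if_neg, mul_zero]
      simp [Fin.ext_iff] at hi ⊢
      omega
    · intro hmem; exact absurd (Finset.mem_univ _) hmem
  · simp only [dif_neg h]

end aux

section compl
variable {Λ' : Type} [Ring Λ'] {n m : ℕ}

/-- The complement: vectors whose first `m` coordinates vanish. -/
def cmpl (Λ' : Type) [Ring Λ'] (n m : ℕ) (hmn : m ≤ n) : Submodule Λ' (Fin n → Λ') where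
  carrier := {v | ∀ i : Fin m, v (Fin.castLE hmn i) = 0}
  add_mem' := by intro a b ha hb i; simp [ha i, hb i]
  zero_mem' := by intro i; simp
  smul_mem' := by intro c a ha i; simp [ha i]

lemma mem_cmpl_iff (hmn : m ≤ n) (v : Fin n → Λ') :
    v ∈ cmpl Λ' n m hmn ↔ ∀ i : Fin m, v (Fin.castLE hmn i) = 0 := Iff.rfl

lemma isCompl_vvec (hmn : m ≤ n) (B : Matrix (Fin m) (Fin (n-m)) Λ') :
    IsCompl (Submodule.span Λ' (Set.range (vvec hmn B))) (cmpl Λ' n m hmn) := by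
  constructor
  · rw [Submodule.disjoint_def]
    intro x hx hx'
    rw [Submodule.mem_span_range_iff_exists_fun] at hx
    obtain ⟨c, rfl⟩ := hx
    have hc : ∀ i : Fin m, c i = 0 := by
      intro i
      have := (mem_cmpl_iff hmn _).mp hx' i
      rw [lincomb_apply] at this
      rw [dif_pos (by simp [Fin.coe_castLE, i.isLt])] at this
      simpa [Fin.ext_iff] using this
    rw [Finset.sum_eq_zero]
    intro i _
    rw [hc i, zero_smul]
  · rw [codisjoint_iff, eq_top_iff]
    intro x _
    set y := ∑ i : Fin m, x (Fin.castLE hmn i) • vvec hmn B i with hy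
    have hyQ : y ∈ Submodule.span Λ' (Set.range (vvec hmn B)) := by
      rw [Submodule.mem_span_range_iff_exists_fun]
      exact ⟨_, rfl⟩
    have hxy : x - y ∈ cmpl Λ' n m hmn := by
      rw [mem_cmpl_iff]
      intro i
      rw [Pi.sub_apply, hy, lincomb_apply, dif_pos (by simp [i.isLt])]
      simp [sub_eq_zero]
    rw [Submodule.mem_sup]
    exact ⟨y, hyQ, x - y, hxy, by abel⟩

end compl

section map
variable {Λ' Λ : Type} [Ring Λ'] [Ring Λ] (p : Λ' →+* Λ) [RingHomSurjective p] {n m : ℕ}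

lemma piMap_apply (v : Fin n → Λ') (k : Fin n) : piMap p n v k = p (v k) := rfl

lemma piMap_vvec (hmn : m ≤ n) (B : Matrix (Fin m) (Fin (n-m)) Λ')
    (hB : ∀ i j, p (B i j) = 0) (i : Fin m) :
    piMap p n (vvec hmn B i) = Pi.single (Fin.castLE hmn i) (1 : Λ) := by
  funext k
  rw [piMap_apply, vvec_apply, Pi.single_apply]
  by_cases h : (k : ℕ) < m
  · rw [dif_pos h]
    by_cases h2 : (k : ℕ) = (i : ℕ)
    · rw [if_pos h2, if_pos (by simp [Fin.ext_iff, h2]), map_one]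
    · rw [if_neg h2, map_zero, if_neg]
      intro hk
      exact h2 (by simpa [Fin.ext_iff] using hk)
  · rw [dif_neg h, hB, if_neg]
    intro hk
    have := congrArg Fin.val hk
    simp at this
    omega

lemma map_span_vvec (hmn : m ≤ n) (B : Matrix (Fin m) (Fin (n-m)) Λ')
    (hB : ∀ i j, p (B i j) = 0) :
    Submodule.map (piMap p n) (Submodule.span Λ' (Set.range (vvec hmn B))) =
      Submodule.span Λ (Set.range fun i : Fin m =>
        Pi.single (Fin.castLE hmn i) (1 : Λ)) := by
  rw [Submodule.map_span, ← Set.range_comp]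
  exact congrArg _ (congrArg Set.range (funext fun i => piMap_vvec p hmn B hB i))

end map

section inj
variable {Λ' : Type} [Ring Λ'] {n m : ℕ}

lemma span_vvec_injective (hmn : m ≤ n) :
    Function.Injective (fun B : Matrix (Fin m) (Fin (n-m)) Λ' =>
      Submodule.span Λ' (Set.range (vvec hmn B))) := by
  intro B B' hBB'
  ext i j
  have hv : vvec hmn B i ∈ Submodule.span Λ' (Set.range (vvec hmn B')) := by
    dsimp only at hBB'
    rw [← hBB']; exact Submodule.subset_span ⟨i, rfl⟩
  rw [Submodule.mem_span_range_iff_exists_fun] at hv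
  obtain ⟨c, hc⟩ := hv
  have hδ : ∀ l : Fin m, c l = if (l : ℕ) = (i : ℕ) then 1 else 0 := by
    intro l
    have h1 := congrFun hc (Fin.castLE hmn l)
    rw [lincomb_apply, vvec_apply, dif_pos (by simp [l.isLt]),
      dif_pos (by simp [l.isLt])] at h1
    simpa using h1
  have h2 := congrFun hc (Fin.cast (Nat.sub_add_cancel hmn) (j.addNat m))
  have hknm : ¬ ((Fin.cast (Nat.sub_add_cancel hmn) (j.addNat m) : Fin n) : ℕ) < m := by
    simp
  rw [lincomb_apply, vvec_apply, dif_neg hknm, dif_neg hknm] at h2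
  simp only [Fin.coe_cast, Fin.coe_addNat, Nat.add_sub_cancel, Fin.eta] at h2
  rw [← h2, Finset.sum_eq_single i]
  · rw [hδ, if_pos rfl, one_mul]
  · intro l _ hl
    rw [hδ, if_neg (by simp [Fin.ext_iff] at hl ⊢; omega), zero_mul]
  · intro hmem; exact absurd (Finset.mem_univ _) hmem

end inj

section surj
variable {Λ' Λ : Type} [Ring Λ'] [Ring Λ] (p : Λ' →+* Λ) [RingHomSurjective p] {n m : ℕ}

lemma span_vvec_surjective
    (hsurj : Function.Surjective p)
    (hsq : ∀ x y : Λ', p x = 0 → p y = 0 → x * y = 0)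
    (hmn : m ≤ n)
    (Q' : Submodule Λ' (Fin n → Λ')) (C₀ : Submodule Λ' (Fin n → Λ')) (hC : IsCompl Q' C₀)
    (hmap : Submodule.map (piMap p n) Q' = Submodule.span Λ (Set.range fun i : Fin m =>
      Pi.single (Fin.castLE hmn i) (1 : Λ))) :
    ∃ B : Matrix (Fin m) (Fin (n-m)) Λ', (∀ i j, p (B i j) = 0) ∧
      Q' = Submodule.span Λ' (Set.range (vvec hmn B)) := by
  classical
  -- Step A: lift the basis vectors of Q into Q'
  have hA : ∀ i : Fin m, ∃ x, x ∈ Q' ∧ piMap p n x = Pi.single (Fin.castLE hmn i) (1 : Λ) := by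
    intro i
    have h1 : Pi.single (Fin.castLE hmn i) (1 : Λ) ∈ Submodule.map (piMap p n) Q' := by
      rw [hmap]; exact Submodule.subset_span ⟨i, rfl⟩
    obtain ⟨x, hx, hpx⟩ := h1
    exact ⟨x, hx, hpx⟩
  choose q' hq'Q hq'p using hA
  -- generic decomposition of elements of Q'
  have key : ∀ z ∈ Q', ∃ d : Fin m → Λ', ∃ w, w ∈ Q' ∧ (∀ k, p (w k) = 0) ∧
      z = (∑ i, d i • q' i) + w := by
    intro z hz
    have hπz : piMap p n z ∈ Submodule.span Λ (Set.range fun i : Fin m =>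
        Pi.single (Fin.castLE hmn i) (1 : Λ)) := by
      rw [← hmap]; exact Submodule.mem_map_of_mem hz
    rw [Submodule.mem_span_range_iff_exists_fun] at hπz
    obtain ⟨c, hc⟩ := hπz
    choose d hd using fun i => hsurj (c i)
    have hQmem : (∑ i, d i • q' i) ∈ Q' :=
      Submodule.sum_mem _ fun i _ => Submodule.smul_mem _ _ (hq'Q i)
    refine ⟨d, z - ∑ i, d i • q' i, Submodule.sub_mem _ hz hQmem, ?_, by abel⟩
    intro k
    have h1 : piMap p n (∑ i, d i • q' i) =
        ∑ i, c i • (Pi.single (Fin.castLE hmn i) (1 : Λ) : Fin n → Λ) := by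
      rw [map_sum]
      refine Finset.sum_congr rfl fun i _ => ?_
      rw [LinearMap.map_smulₛₗ, hq'p, hd]
    have h2 : piMap p n (z - ∑ i, d i • q' i) = 0 := by
      rw [map_sub, h1, hc, sub_self]
    have h3 := congrFun h2 k
    exact h3
  -- the projection onto Q'
  set g : (Fin n → Λ') →ₗ[Λ'] (Fin n → Λ') :=
    Q'.subtype.comp (Q'.linearProjOfIsCompl C₀ hC) with hg
  have hg_mem : ∀ x, g x ∈ Q' := fun x => (Q'.linearProjOfIsCompl C₀ hC x).2
  have hg_id : ∀ x ∈ Q', g x = x := fun x hx =>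
    congrArg Subtype.val (Submodule.linearProjOfIsCompl_apply_left hC ⟨x, hx⟩)
  -- elements of Q' with coordinates in the kernel lie in the span of q'
  have hker_span : ∀ w ∈ Q', (∀ k, p (w k) = 0) →
      w ∈ Submodule.span Λ' (Set.range q') := by
    intro w hwQ hwI
    choose d' w' hw'Q hw'I hrep using fun k : Fin n => key _ (hg_mem (Pi.single k (1 : Λ')))
    have hwrep : w = ∑ k : Fin n, w k • (Pi.single k (1 : Λ') : Fin n → Λ') := by
      funext l
      rw [Finset.sum_apply]
      simp only [Pi.smul_apply, smul_eq_mul, Pi.single_apply, mul_ite, mul_one, mul_zero]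
      rw [Finset.sum_ite_eq]
      simp
    have hw2 : w = ∑ k : Fin n, w k • ((∑ i, d' k i • q' i) + w' k) := by
      conv_lhs => rw [← hg_id w hwQ, hwrep, map_sum]
      refine Finset.sum_congr rfl fun k _ => ?_
      rw [map_smul, ← hrep k]
    rw [hw2]
    refine Submodule.sum_mem _ fun k _ => ?_
    have hzero : w k • w' k = 0 := by
      funext l
      rw [Pi.smul_apply, smul_eq_mul, hsq _ _ (hwI k) (hw'I k l)]
      rfl
    rw [smul_add, hzero, add_zero, Finset.smul_sum]
    refine Submodule.sum_mem _ fun i _ => ?_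
    rw [smul_smul]
    exact Submodule.smul_mem _ _ (Submodule.subset_span ⟨i, rfl⟩)
  -- Q' is the span of the q'
  have hspanq : Q' = Submodule.span Λ' (Set.range q') := by
    apply le_antisymm
    · intro x hx
      obtain ⟨d, w, hwQ, hwI, hxd⟩ := key x hx
      rw [hxd]
      refine Submodule.add_mem _ ?_ (hker_span w hwQ hwI)
      exact Submodule.sum_mem _ fun i _ =>
        Submodule.smul_mem _ _ (Submodule.subset_span ⟨i, rfl⟩)
    · rw [Submodule.span_le]
      rintro _ ⟨i, rfl⟩
      exact hq'Q i
  -- Step D: normalization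
  set N : Fin m → Fin m → Λ' := fun i k =>
    q' i (Fin.castLE hmn k) - (if (k : ℕ) = (i : ℕ) then 1 else 0) with hNdef
  have hq'coord : ∀ (i : Fin m) (k : Fin n),
      p (q' i k) = if k = Fin.castLE hmn i then 1 else 0 := by
    intro i k
    have h1 := congrFun (hq'p i) k
    rw [Pi.single_apply] at h1
    exact h1
  have hN : ∀ i k, p (N i k) = 0 := by
    intro i k
    rw [hNdef]
    simp only []
    rw [map_sub, hq'coord, apply_ite p, map_one, map_zero, sub_eq_zero]
    simp [Fin.ext_iff]
  set r : Fin m → (Fin n → Λ') := fun i => q' i - ∑ k, N i k • q' k with hrdef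
  have hql : ∀ (l k : Fin m),
      q' l (Fin.castLE hmn k) = (if (k : ℕ) = (l : ℕ) then 1 else 0) + N l k := by
    intro l k
    rw [hNdef]
    simp only []
    abel
  have hrcoordL : ∀ i k : Fin m,
      r i (Fin.castLE hmn k) = if (k : ℕ) = (i : ℕ) then 1 else 0 := by
    intro i k
    rw [hrdef]
    simp only [Pi.sub_apply, Finset.sum_apply, Pi.smul_apply, smul_eq_mul]
    have hsum : ∑ l, N i l * q' l (Fin.castLE hmn k) = N i k := by
      have : ∀ l, N i l * q' l (Fin.castLE hmn k)
          = N i l * (if (k : ℕ) = (l : ℕ) then 1 else 0) + N i l * N l k := by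
        intro l
        rw [hql l k, mul_add]
      rw [Finset.sum_congr rfl fun l _ => this l, Finset.sum_add_distrib]
      have h2 : ∑ l, N i l * N l k = 0 :=
        Finset.sum_eq_zero fun l _ => hsq _ _ (hN i l) (hN l k)
      rw [h2, add_zero]
      rw [Finset.sum_eq_single k]
      · rw [if_pos rfl, mul_one]
      · intro l _ hl
        rw [if_neg (by simp [Fin.ext_iff] at hl ⊢; omega), mul_zero]
      · intro hmem; exact absurd (Finset.mem_univ _) hmem
    rw [hsum, hql i k, add_sub_cancel_right]
  have hrker : ∀ (i : Fin m) (k : Fin n), ¬ ((k : ℕ) < m) → p (r i k) = 0 := by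
    intro i k hk
    rw [hrdef]
    simp only [Pi.sub_apply, Finset.sum_apply, Pi.smul_apply, smul_eq_mul]
    rw [map_sub, map_sum, hq'coord]
    rw [if_neg (by intro hh; rw [hh] at hk; simp at hk)]
    rw [Finset.sum_eq_zero fun l _ => by rw [map_mul, hN, zero_mul], sub_zero]
  set B : Matrix (Fin m) (Fin (n-m)) Λ' := fun i j =>
    r i (Fin.cast (Nat.sub_add_cancel hmn) (j.addNat m)) with hBdef
  have hBker : ∀ i j, p (B i j) = 0 := by
    intro i j
    exact hrker i _ (by simp)
  have hrv : r = vvec hmn B := by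
    funext i k
    rw [vvec_apply]
    by_cases h : (k : ℕ) < m
    · rw [dif_pos h]
      have hk : k = Fin.castLE hmn ⟨(k : ℕ), h⟩ := Fin.ext (by simp)
      rw [hk, hrcoordL]
      simp
    · rw [dif_neg h]
      have hk : k = Fin.cast (Nat.sub_add_cancel hmn)
          ((⟨(k : ℕ) - m, by have := k.isLt; omega⟩ : Fin (n - m)).addNat m) :=
        Fin.ext (by simp; omega)
      simp only [hBdef]
      exact congrArg (r i) hk
  -- span q' = span r
  have hq'r : ∀ i, r i + ∑ k, N i k • r k = q' i := by
    intro i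
    have hz : ∀ k, N i k • (∑ l, N k l • q' l) = (0 : Fin n → Λ') := by
      intro k
      rw [Finset.smul_sum]
      exact Finset.sum_eq_zero fun l _ => by
        rw [smul_smul, hsq _ _ (hN i k) (hN k l), zero_smul]
    rw [hrdef]
    simp only [smul_sub, hz, sub_zero]
    abel
  have hspan_rq : Submodule.span Λ' (Set.range q') = Submodule.span Λ' (Set.range r) := by
    apply le_antisymm
    · rw [Submodule.span_le]
      rintro _ ⟨i, rfl⟩
      rw [← hq'r i]
      exact Submodule.add_mem _ (Submodule.subset_span ⟨i, rfl⟩)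
        (Submodule.sum_mem _ fun k _ =>
          Submodule.smul_mem _ _ (Submodule.subset_span ⟨k, rfl⟩))
    · rw [Submodule.span_le]
      rintro _ ⟨i, rfl⟩
      rw [hrdef]
      exact Submodule.sub_mem _ (Submodule.subset_span ⟨i, rfl⟩)
        (Submodule.sum_mem _ fun k _ =>
          Submodule.smul_mem _ _ (Submodule.subset_span ⟨k, rfl⟩))
  exact ⟨B, hBker, by rw [hspanq, hspan_rq, hrv]⟩
end surj

/-- Let `0 → I → Λ' → Λ → 0` be a central extension of rings, `P' = (Λ')ⁿ` free, and
`Q ⊆ Λⁿ` the free direct summand spanned by the first `m` standard basis vectors.  Then the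
set of direct summands `Q' ⊆ (Λ')ⁿ` lifting `Q` is nonempty, and is in bijection with
`m × (n-m)` matrices over `I`: the extension corresponding to a matrix `B` is spanned by the
vectors `e'_i + Σ_j B i j • e'_{m+j}`. -/
theorem lifts_of_direct_summand_are_matrices_over_I
    (Λ' Λ : Type) [Ring Λ'] [Ring Λ] (p : Λ' →+* Λ) [RingHomSurjective p]
    (hsurj : Function.Surjective p)
    (hsq : ∀ x y : Λ', p x = 0 → p y = 0 → x * y = 0)
    (hcent : ∀ x : Λ', p x = 0 → ∀ r : Λ', x * r = r * x)
    (n m : ℕ) (hmn : m ≤ n) :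
    Nonempty {Q' : Submodule Λ' (Fin n → Λ') //
        (∃ C, IsCompl Q' C) ∧ Submodule.map (piMap p n) Q' =
          Submodule.span Λ (Set.range fun i : Fin m => Pi.single (Fin.castLE hmn i) (1 : Λ))} ∧
      ∃ e : {Q' : Submodule Λ' (Fin n → Λ') //
          (∃ C, IsCompl Q' C) ∧ Submodule.map (piMap p n) Q' =
            Submodule.span Λ (Set.range fun i : Fin m =>
              Pi.single (Fin.castLE hmn i) (1 : Λ))} ≃
          Matrix (Fin m) (Fin (n - m)) (RingHom.ker p),
        ∀ B : Matrix (Fin m) (Fin (n - m)) (RingHom.ker p),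
          (e.symm B : Submodule Λ' (Fin n → Λ')) =
            Submodule.span Λ' (Set.range fun i : Fin m =>
              Pi.single (Fin.castLE hmn i) (1 : Λ') +
                ∑ j : Fin (n - m),
                  Pi.single (Fin.cast (Nat.sub_add_cancel hmn) (j.addNat m))
                    ((B i j : Λ'))) := by
  classical
  let F : Matrix (Fin m) (Fin (n - m)) (RingHom.ker p) →
      {Q' : Submodule Λ' (Fin n → Λ') //
        (∃ C, IsCompl Q' C) ∧ Submodule.map (piMap p n) Q' =
          Submodule.span Λ (Set.range fun i : Fin m =>
            Pi.single (Fin.castLE hmn i) (1 : Λ))} :=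
    fun B => ⟨Submodule.span Λ' (Set.range (vvec hmn (fun i j => (B i j : Λ')))),
      ⟨cmpl Λ' n m hmn, isCompl_vvec hmn _⟩,
      map_span_vvec p hmn _ (fun i j => RingHom.mem_ker.mp (B i j).2)⟩
  have hFinj : Function.Injective F := by
    intro B B' hBB'
    have h1 := span_vvec_injective hmn (Subtype.ext_iff.mp hBB')
    ext i j
    exact congrFun (congrFun h1 i) j
  have hFsurj : Function.Surjective F := by
    rintro ⟨Q', ⟨C₀, hC⟩, hmap⟩
    obtain ⟨B, hBker, hQ'⟩ := span_vvec_surjective p hsurj hsq hmn Q' C₀ hC hmap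
    refine ⟨fun i j => ⟨B i j, RingHom.mem_ker.mpr (hBker i j)⟩, ?_⟩
    exact Subtype.ext hQ'.symm
  refine ⟨⟨F 0⟩, (Equiv.ofBijective F ⟨hFinj, hFsurj⟩).symm, ?_⟩
  intro B
  rw [Equiv.symm_symm]
  rfl
end

section
/- Let Λ₁ → Λ ← Λ₂ be ring maps with at least one surjective, Λ₁₂ = Λ₁ ×_Λ Λ₂ the fiber product ring. If V₁ ⊆ Λ₁^n and V₂ ⊆ Λ₂^n are direct summands (as left modules) whose images in Λ^n agree with a common direct summand V, then Ṽ = V₁ ×_V V₂ is a direct summand of Λ₁₂^n ≅ (Λ₁ ×_Λ Λ₂)^n. -/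
theorem add_one_sub_mul_sub_mul_eq {R : Type*} [Ring R] {p q : R} (hpq : p * q = p)
    (hqp : q * p = q) : q + (1 - q) * (p - q) * q = p := by
  have hqq : q * q = q := by
    calc q * q = q * p * q := by rw [hqp]
      _ = q := by rw [mul_assoc, hpq, hqp]
  have hqpq : q * p * q = q := by rw [hqp, hqq]
  calc q + (1 - q) * (p - q) * q = q + p * q - q * p * q - q * q + q * q * q := by noncomm_ring
    _ = p := by rw [hpq, hqpq, hqq, hqq]; abel

open LinearMap Matrix

section ProjectionMatrix

variable {ι A B : Type*} [Fintype ι] [Ring A] [Ring B]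

theorem Matrix.exists_isProj_vecMulLinear_of_isCompl [DecidableEq ι] {W C : Submodule A (ι → A)}
    (h : IsCompl W C) : ∃ P : Matrix ι ι A, IsProj W P.vecMulLinear := by
  refine ⟨toMatrixRight' (W.projection C h), ?_⟩
  have hP : (toMatrixRight' (W.projection C h)).vecMulLinear = W.projection C h :=
    toMatrixRight'.symm_apply_apply _
  have hproj := (Submodule.isIdempotentElem_projection h).isProj_range
  rwa [Submodule.range_projection, ← hP] at hproj

theorem Matrix.mul_eq_left_of_isProj [DecidableEq ι] {W : Submodule A (ι → A)} {P Q : Matrix ι ι A}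
    (hP : IsProj W P.vecMulLinear) (hQ : IsProj W Q.vecMulLinear) : P * Q = P :=
  toLinearMapRight'.injective <| LinearMap.ext fun v => by
    rw [toLinearMapRight'_mul_apply]
    exact hQ.map_id _ (hP.map_mem v)

theorem LinearMap.IsProj.vecMulLinear_add_one_sub_mul_mul [DecidableEq ι]
    {W : Submodule A (ι → A)} {e : Matrix ι ι A}
    (he : IsProj W e.vecMulLinear) (x : Matrix ι ι A) :
    IsProj W (e + (1 - e) * x * e).vecMulLinear where
  map_mem v := by
    simp only [vecMulLinear_apply, vecMul_add, ← vecMul_vecMul]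
    exact W.add_mem (he.map_mem v) (he.map_mem _)
  map_id v hv := by
    have hve : v ᵥ* e = v := he.map_id v hv
    simp only [vecMulLinear_apply, vecMul_add, ← vecMul_vecMul, vecMul_sub, vecMul_one, hve,
      sub_self, zero_vecMul, add_zero]

theorem LinearMap.IsProj.vecMulLinear_map {W : Submodule A (ι → A)} {V : Submodule B (ι → B)}
    {P : Matrix ι ι A}
    (hP : IsProj W P.vecMulLinear) (f : A →+* B)
    (hWV : (fun v : ι → A => fun i => f (v i)) '' ↑W = ↑V) :
    IsProj V (P.map f).vecMulLinear where
  map_mem w := by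
    classical
    have hrow : ∀ j, (fun i => f (P j i)) ∈ V := fun j => by
      have hPj := hP.map_mem (Pi.single j 1)
      rw [vecMulLinear_apply, single_one_vecMul] at hPj
      rw [← SetLike.mem_coe, ← hWV]
      exact ⟨P j, hPj, rfl⟩
    rw [vecMulLinear_apply, vecMul_eq_sum]
    exact V.sum_mem fun j _ => V.smul_mem _ (hrow j)
  map_id w hw := by
    rw [← SetLike.mem_coe, ← hWV] at hw
    obtain ⟨v, hv, rfl⟩ := hw
    have hvP : v ᵥ* P = v := hP.map_id v hv
    calc (fun i => f (v i)) ᵥ* P.map f = fun i => f ((v ᵥ* P) i) :=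
          (funext (f.map_vecMul P v)).symm
      _ = fun i => f (v i) := by rw [hvP]

theorem Matrix.exists_isProj_map_eq [DecidableEq ι] {f : A →+* B} (hf : Function.Surjective f)
    {W : Submodule A (ι → A)} {V : Submodule B (ι → B)} {Q : Matrix ι ι A} {p : Matrix ι ι B}
    (hQ : IsProj W Q.vecMulLinear) (hQV : IsProj V (Q.map f).vecMulLinear)
    (hp : IsProj V p.vecMulLinear) :
    ∃ P : Matrix ι ι A, IsProj W P.vecMulLinear ∧ P.map f = p := by
  obtain ⟨x, hx⟩ : ∃ x : Matrix ι ι A, x.map f = p - Q.map f :=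
    ⟨(p - Q.map f).map (Function.surjInv hf), by ext; simp [Function.surjInv_eq hf]⟩
  refine ⟨Q + (1 - Q) * x * Q, hQ.vecMulLinear_add_one_sub_mul_mul x, ?_⟩
  change f.mapMatrix _ = p
  simp only [map_add, map_mul, map_sub, map_one, RingHom.mapMatrix_apply, hx]
  exact add_one_sub_mul_sub_mul_eq (mul_eq_left_of_isProj hp hQV) (mul_eq_left_of_isProj hQV hp)

end ProjectionMatrix

section FiberProduct

variable {Λ₁ Λ₂ Λ : Type} [Ring Λ₁] [Ring Λ₂] [Ring Λ]

theorem piMap_vecMul {A B : Type} [Ring A] [Ring B] (g : A →+* B) {n : ℕ}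
    (v : Fin n → A) (P : Matrix (Fin n) (Fin n) A) :
    piMap g n (v ᵥ* P) = piMap g n v ᵥ* P.map g :=
  funext (g.map_vecMul P v)

abbrev fiberProd (f₁ : Λ₁ →+* Λ) (f₂ : Λ₂ →+* Λ) : Subring (Λ₁ × Λ₂) :=
  RingHom.eqLocus (f₁.comp (RingHom.fst Λ₁ Λ₂)) (f₂.comp (RingHom.snd Λ₁ Λ₂))

theorem exists_isProj_fiberProd (f₁ : Λ₁ →+* Λ) (f₂ : Λ₂ →+* Λ) {n : ℕ}
    {V₁ : Submodule Λ₁ (Fin n → Λ₁)} {V₂ : Submodule Λ₂ (Fin n → Λ₂)}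
    {P₁ : Matrix (Fin n) (Fin n) Λ₁} {P₂ : Matrix (Fin n) (Fin n) Λ₂}
    (h : P₁.map f₁ = P₂.map f₂) (hP₁ : IsProj V₁ P₁.vecMulLinear)
    (hP₂ : IsProj V₂ P₂.vecMulLinear) :
    ∃ P : Matrix (Fin n) (Fin n) (fiberProd f₁ f₂), IsProj
      (Submodule.comap (piMap ((RingHom.fst Λ₁ Λ₂).comp (fiberProd f₁ f₂).subtype) n) V₁ ⊓
        Submodule.comap (piMap ((RingHom.snd Λ₁ Λ₂).comp (fiberProd f₁ f₂).subtype) n) V₂)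
      P.vecMulLinear := by
  set g₁ := (RingHom.fst Λ₁ Λ₂).comp (fiberProd f₁ f₂).subtype
  set g₂ := (RingHom.snd Λ₁ Λ₂).comp (fiberProd f₁ f₂).subtype
  let P : Matrix (Fin n) (Fin n) (fiberProd f₁ f₂) :=
    Matrix.of fun i j => ⟨(P₁ i j, P₂ i j), congrFun (congrFun h i) j⟩
  have hg₁ : ∀ v, piMap g₁ n (v ᵥ* P) = piMap g₁ n v ᵥ* P₁ := fun v => piMap_vecMul g₁ v P
  have hg₂ : ∀ v, piMap g₂ n (v ᵥ* P) = piMap g₂ n v ᵥ* P₂ := fun v => piMap_vecMul g₂ v P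
  refine ⟨P, fun v => Submodule.mem_inf.2 ⟨?_, ?_⟩, fun v hv => ?_⟩
  · rw [Submodule.mem_comap, vecMulLinear_apply, hg₁]
    exact hP₁.map_mem _
  · rw [Submodule.mem_comap, vecMulLinear_apply, hg₂]
    exact hP₂.map_mem _
  · have h₁ := (hg₁ v).trans (hP₁.map_id _ hv.1)
    have h₂ := (hg₂ v).trans (hP₂.map_id _ hv.2)
    funext i
    exact Subtype.ext (Prod.ext (congrFun h₁ i) (congrFun h₂ i))

end FiberProduct

theorem fiber_product_of_direct_summands_is_direct_summand_general
    (Λ₁ Λ₂ Λ : Type) [Ring Λ₁] [Ring Λ₂] [Ring Λ]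
    (f₁ : Λ₁ →+* Λ) (f₂ : Λ₂ →+* Λ)
    (hsurj : Function.Surjective f₁ ∨ Function.Surjective f₂) (n : ℕ)
    (V₁ : Submodule Λ₁ (Fin n → Λ₁)) (V₂ : Submodule Λ₂ (Fin n → Λ₂))
    (V : Submodule Λ (Fin n → Λ))
    (h₁ : ∃ C, IsCompl V₁ C) (h₂ : ∃ C, IsCompl V₂ C)
    (him₁ : (fun v : Fin n → Λ₁ => fun i => f₁ (v i)) '' ↑V₁ = ↑V)
    (him₂ : (fun v : Fin n → Λ₂ => fun i => f₂ (v i)) '' ↑V₂ = ↑V) :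
    ∃ C, IsCompl
      (Submodule.comap
          (piMap ((RingHom.fst Λ₁ Λ₂).comp
            (RingHom.eqLocus (f₁.comp (RingHom.fst Λ₁ Λ₂))
              (f₂.comp (RingHom.snd Λ₁ Λ₂))).subtype) n) V₁ ⊓
        Submodule.comap
          (piMap ((RingHom.snd Λ₁ Λ₂).comp
            (RingHom.eqLocus (f₁.comp (RingHom.fst Λ₁ Λ₂))
              (f₂.comp (RingHom.snd Λ₁ Λ₂))).subtype) n) V₂) C := by
  obtain ⟨Q₁, hQ₁⟩ := exists_isProj_vecMulLinear_of_isCompl h₁.choose_spec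
  obtain ⟨Q₂, hQ₂⟩ := exists_isProj_vecMulLinear_of_isCompl h₂.choose_spec
  have hQ₁V := hQ₁.vecMulLinear_map f₁ him₁
  have hQ₂V := hQ₂.vecMulLinear_map f₂ him₂
  obtain ⟨P₁, P₂, hP₁, hP₂, hP⟩ : ∃ (P₁ : Matrix (Fin n) (Fin n) Λ₁)
      (P₂ : Matrix (Fin n) (Fin n) Λ₂), IsProj V₁ P₁.vecMulLinear ∧
        IsProj V₂ P₂.vecMulLinear ∧ P₁.map f₁ = P₂.map f₂ := by
    rcases hsurj with hf₁ | hf₂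
    · obtain ⟨P₁, hP₁, h⟩ := exists_isProj_map_eq hf₁ hQ₁ hQ₁V hQ₂V
      exact ⟨P₁, Q₂, hP₁, hQ₂, h⟩
    · obtain ⟨P₂, hP₂, h⟩ := exists_isProj_map_eq hf₂ hQ₂ hQ₂V hQ₁V
      exact ⟨Q₁, P₂, hQ₁, hP₂, h.symm⟩
  obtain ⟨P, hP⟩ := exists_isProj_fiberProd f₁ f₂ hP hP₁ hP₂
  exact ⟨_, hP.isCompl⟩

/-- Milnor patching for direct summands: given ring maps `Λ₁ → Λ ← Λ₂` with at least one
surjective, and direct summands `V₁ ⊆ Λ₁ⁿ`, `V₂ ⊆ Λ₂ⁿ` whose images in `Λⁿ` agree with a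
common direct summand `V`, the fiber product `Ṽ = V₁ ×_V V₂` is a direct summand of
`(Λ₁ ×_Λ Λ₂)ⁿ`. -/
theorem fiber_product_of_direct_summands_is_direct_summand
    (Λ₁ Λ₂ Λ : Type) [Ring Λ₁] [Ring Λ₂] [Ring Λ]
    (f₁ : Λ₁ →+* Λ) (f₂ : Λ₂ →+* Λ)
    (hsurj : Function.Surjective f₁ ∨ Function.Surjective f₂) (n : ℕ)
    (V₁ : Submodule Λ₁ (Fin n → Λ₁)) (V₂ : Submodule Λ₂ (Fin n → Λ₂))
    (V : Submodule Λ (Fin n → Λ))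
    (h₁ : ∃ C, IsCompl V₁ C) (h₂ : ∃ C, IsCompl V₂ C) (hV : ∃ C, IsCompl V C)
    (him₁ : (fun v : Fin n → Λ₁ => fun i => f₁ (v i)) '' ↑V₁ = ↑V)
    (him₂ : (fun v : Fin n → Λ₂ => fun i => f₂ (v i)) '' ↑V₂ = ↑V) :
    ∃ C, IsCompl
      (Submodule.comap
          (piMap ((RingHom.fst Λ₁ Λ₂).comp
            (RingHom.eqLocus (f₁.comp (RingHom.fst Λ₁ Λ₂))
              (f₂.comp (RingHom.snd Λ₁ Λ₂))).subtype) n) V₁ ⊓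
        Submodule.comap
          (piMap ((RingHom.snd Λ₁ Λ₂).comp
            (RingHom.eqLocus (f₁.comp (RingHom.fst Λ₁ Λ₂))
              (f₂.comp (RingHom.snd Λ₁ Λ₂))).subtype) n) V₂) C :=
  fiber_product_of_direct_summands_is_direct_summand_general Λ₁ Λ₂ Λ f₁ f₂ hsurj n V₁ V₂ V h₁ h₂
    him₁ him₂
end
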